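/- Let E, F be Banach spaces, let 1 ≤ s ≤ q < ∞ and 0 < p ≤ t < ∞, and let P : E → F be a continuous m-homogeneous polynomial that is absolutely (t,s)-summing with constant C ≥ 0. Then for every positive integer n and all x₁,…,xₙ ∈ E, one has (Σ_{j=1}^n ‖P(x_j)‖^p)^{1/p} ≤ C · n^{1/p − 1/t + m/s − m/q} · ‖(x_j)_{j=1}^n‖_{w,q}^m. -/

import Mathlib

open Finset

/-- The weak `q`-norm `‖(x_k)_{k=1}^n‖_{w,q} = sup_{φ ∈ B_{E*}} (∑ |φ(x_k)|^q)^{1/q}`. -/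
noncomputable def weakNorm (𝕜 : Type*) [RCLike 𝕜] {E : Type*} [NormedAddCommGroup E]
    [NormedSpace 𝕜 E] {n : ℕ} (x : Fin n → E) (q : ℝ) : ℝ :=
  sSup {r : ℝ | ∃ φ : E →L[𝕜] 𝕜, ‖φ‖ ≤ 1 ∧ r = (∑ k, ‖φ (x k)‖ ^ q) ^ (1 / q)}

/-!
Both factors of the exponent come from the power-mean inequality
`‖v‖_a ≤ n^{1/a - 1/b} ‖v‖_b` for `0 < a ≤ b` on `ℝⁿ`: applied to `(‖P(x_j)‖)_j` it passes from
`ℓ_p` to `ℓ_t`, and applied to `(|φ(x_j)|)_j` for every `φ` in the dual ball it gives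
`‖(x_j)‖_{w,s} ≤ n^{1/s - 1/q} ‖(x_j)‖_{w,q}`, which is then raised to the power `m`.
-/

theorem Real.Lp_le_card_rpow_mul_Lq_of_nonneg {ι : Type*} (s : Finset ι) {f : ι → ℝ}
    (hf : ∀ i ∈ s, 0 ≤ f i) {a b : ℝ} (ha : 0 < a) (hab : a ≤ b) :
    (∑ i ∈ s, f i ^ a) ^ (1 / a) ≤ (#s : ℝ) ^ (1 / a - 1 / b) * (∑ i ∈ s, f i ^ b) ^ (1 / b) := by
  have hb : 0 < b := ha.trans_le hab
  have hpow : (∑ i ∈ s, f i ^ a) ^ (b / a) ≤ (#s : ℝ) ^ (b / a - 1) * ∑ i ∈ s, f i ^ b := by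
    have h := Real.rpow_sum_le_const_mul_sum_rpow_of_nonneg s (f := fun i => f i ^ a)
      ((one_le_div ha).2 hab) fun i hi => Real.rpow_nonneg (hf i hi) a
    refine h.trans_eq (congrArg _ (sum_congr rfl fun i hi => ?_))
    rw [← Real.rpow_mul (hf i hi), mul_div_cancel₀ b ha.ne']
  have hsum_a : 0 ≤ ∑ i ∈ s, f i ^ a := sum_nonneg fun i hi => Real.rpow_nonneg (hf i hi) a
  have hsum_b : 0 ≤ ∑ i ∈ s, f i ^ b := sum_nonneg fun i hi => Real.rpow_nonneg (hf i hi) b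
  calc (∑ i ∈ s, f i ^ a) ^ (1 / a) = ((∑ i ∈ s, f i ^ a) ^ (b / a)) ^ (1 / b) := by
        rw [← Real.rpow_mul hsum_a]; field_simp
    _ ≤ ((#s : ℝ) ^ (b / a - 1) * ∑ i ∈ s, f i ^ b) ^ (1 / b) := by gcongr
    _ = (#s : ℝ) ^ (1 / a - 1 / b) * (∑ i ∈ s, f i ^ b) ^ (1 / b) := by
        rw [Real.mul_rpow (by positivity) hsum_b, ← Real.rpow_mul (Nat.cast_nonneg _)]
        congr 2
        field_simp

section weakNorm

variable (𝕜 : Type*) [RCLike 𝕜] {E : Type*} [NormedAddCommGroup E] [NormedSpace 𝕜 E]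
  {n : ℕ} (x : Fin n → E)

theorem weakNorm_nonneg (q : ℝ) : 0 ≤ weakNorm 𝕜 x q := by
  refine Real.sSup_nonneg ?_
  rintro r ⟨φ, -, rfl⟩
  exact Real.rpow_nonneg (sum_nonneg fun k _ => Real.rpow_nonneg (norm_nonneg _) q) _

theorem le_weakNorm {q : ℝ} (hq : 0 < q) {φ : E →L[𝕜] 𝕜} (hφ : ‖φ‖ ≤ 1) :
    (∑ k, ‖φ (x k)‖ ^ q) ^ (1 / q) ≤ weakNorm 𝕜 x q := by
  refine le_csSup ⟨(∑ k, ‖x k‖ ^ q) ^ (1 / q), ?_⟩ ⟨φ, hφ, rfl⟩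
  rintro r ⟨ψ, hψ, rfl⟩
  gcongr with k
  calc ‖ψ (x k)‖ ≤ ‖ψ‖ * ‖x k‖ := ψ.le_opNorm _
    _ ≤ ‖x k‖ := mul_le_of_le_one_left (norm_nonneg _) hψ

theorem weakNorm_le_rpow_mul_weakNorm {s q : ℝ} (hs : 0 < s) (hsq : s ≤ q) :
    weakNorm 𝕜 x s ≤ (n : ℝ) ^ (1 / s - 1 / q) * weakNorm 𝕜 x q := by
  refine Real.sSup_le ?_ (by have := weakNorm_nonneg 𝕜 x q; positivity)
  rintro r ⟨φ, hφ, rfl⟩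
  calc (∑ k, ‖φ (x k)‖ ^ s) ^ (1 / s)
      ≤ (n : ℝ) ^ (1 / s - 1 / q) * (∑ k, ‖φ (x k)‖ ^ q) ^ (1 / q) := by
        simpa using Real.Lp_le_card_rpow_mul_Lq_of_nonneg univ (fun k _ => norm_nonneg (φ (x k)))
          hs hsq
    _ ≤ (n : ℝ) ^ (1 / s - 1 / q) * weakNorm 𝕜 x q := by
        gcongr
        exact le_weakNorm 𝕜 x (hs.trans_le hsq) hφ

theorem weakNorm_pow_le_rpow_mul_weakNorm_pow {s q : ℝ} (hs : 0 < s) (hsq : s ≤ q) (m : ℕ) :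
    weakNorm 𝕜 x s ^ m ≤ (n : ℝ) ^ ((m : ℝ) / s - m / q) * weakNorm 𝕜 x q ^ m := by
  calc weakNorm 𝕜 x s ^ m ≤ ((n : ℝ) ^ (1 / s - 1 / q) * weakNorm 𝕜 x q) ^ m := by
        gcongr
        · exact weakNorm_nonneg 𝕜 x s
        · exact weakNorm_le_rpow_mul_weakNorm 𝕜 x hs hsq
    _ = (n : ℝ) ^ ((m : ℝ) / s - m / q) * weakNorm 𝕜 x q ^ m := by
        rw [mul_pow, ← Real.rpow_mul_natCast (Nat.cast_nonneg n)]
        congr 2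
        ring

end weakNorm

theorem stmt4_general {𝕜 : Type*} [RCLike 𝕜] {m : ℕ}
    {E : Type*} [NormedAddCommGroup E] [NormedSpace 𝕜 E]
    {F : Type*} [NormedAddCommGroup F]
    {s q p t : ℝ} (hs : 1 ≤ s) (hsq : s ≤ q) (hp : 0 < p) (hpt : p ≤ t)
    {C : ℝ} (hC : 0 ≤ C)
    (P : E → F)
    (hsum : ∀ (n : ℕ), 0 < n → ∀ x : Fin n → E,
      (∑ k, ‖P (x k)‖ ^ t) ^ (1 / t) ≤ C * (weakNorm 𝕜 x s) ^ m) :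
    ∀ (n : ℕ), 0 < n → ∀ x : Fin n → E,
      (∑ j, ‖P (x j)‖ ^ p) ^ (1 / p)
        ≤ C * (n : ℝ) ^ (1 / p - 1 / t + (m : ℝ) / s - m / q) * (weakNorm 𝕜 x q) ^ m := by
  intro n hn x
  have hn₀ : (0 : ℝ) < n := Nat.cast_pos.mpr hn
  calc (∑ j, ‖P (x j)‖ ^ p) ^ (1 / p)
      ≤ (n : ℝ) ^ (1 / p - 1 / t) * (∑ k, ‖P (x k)‖ ^ t) ^ (1 / t) := by
        simpa using Real.Lp_le_card_rpow_mul_Lq_of_nonneg univ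
          (fun j _ => norm_nonneg (P (x j))) hp hpt
    _ ≤ (n : ℝ) ^ (1 / p - 1 / t) * (C * weakNorm 𝕜 x s ^ m) := by gcongr; exact hsum n hn x
    _ ≤ (n : ℝ) ^ (1 / p - 1 / t) *
          (C * ((n : ℝ) ^ ((m : ℝ) / s - m / q) * weakNorm 𝕜 x q ^ m)) := by
        gcongr
        exact weakNorm_pow_le_rpow_mul_weakNorm_pow 𝕜 x (zero_lt_one.trans_le hs) hsq m
    _ = C * (n : ℝ) ^ (1 / p - 1 / t + (m : ℝ) / s - m / q) * weakNorm 𝕜 x q ^ m := by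
        rw [add_sub_assoc, Real.rpow_add hn₀]
        ring

theorem stmt4 {𝕜 : Type*} [RCLike 𝕜] {m : ℕ} (hm : 1 ≤ m)
    {E : Type*} [NormedAddCommGroup E] [NormedSpace 𝕜 E] [CompleteSpace E]
    {F : Type*} [NormedAddCommGroup F] [NormedSpace 𝕜 F] [CompleteSpace F]
    {s q p t : ℝ} (hs : 1 ≤ s) (hsq : s ≤ q) (hp : 0 < p) (hpt : p ≤ t)
    {C : ℝ} (hC : 0 ≤ C)
    (P : E → F)
    (hP : ∃ T : ContinuousMultilinearMap 𝕜 (fun _ : Fin m => E) F,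
      ∀ x : E, P x = T (fun _ => x))
    (hsum : ∀ (n : ℕ), 0 < n → ∀ x : Fin n → E,
      (∑ k, ‖P (x k)‖ ^ t) ^ (1 / t) ≤ C * (weakNorm 𝕜 x s) ^ m) :
    ∀ (n : ℕ), 0 < n → ∀ x : Fin n → E,
      (∑ j, ‖P (x j)‖ ^ p) ^ (1 / p)
        ≤ C * (n : ℝ) ^ (1 / p - 1 / t + (m : ℝ) / s - m / q) * (weakNorm 𝕜 x q) ^ m :=
  stmt4_general hs hsq hp hpt hC P hsum
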